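/- arXiv:1801.03215 — 5 statements merged into one kernel-verified Lean document; each statement's English description precedes it below -/
import Mathlib

section
/- Let m ≥ 0 and n, r ≥ 1 be integers. Then (1/(r!·n^r)) · Σ_{σ ∈ W(n,r)} |Fix(σ)|^m = Σ_{i=0}^{min(m,r)} S(m,i) · n^{m−i}. -/
/-- Stirling numbers of the second kind. -/
def stirling2 : ℕ → ℕ → ℕ
  | 0, 0 => 1
  | 0, _ + 1 => 0
  | _ + 1, 0 => 0
  | m + 1, i + 1 => (i + 1) * stirling2 m (i + 1) + stirling2 m i

/-- The action of an element of the wreath product `C_n ≀ S_r`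
(encoded as a pair in `(Fin r → ZMod n) × Equiv.Perm (Fin r)`)
on `B(n,r) = ZMod n × Fin r`. -/
def wAct (n r : ℕ) (σ : (Fin r → ZMod n) × Equiv.Perm (Fin r)) :
    ZMod n × Fin r → ZMod n × Fin r :=
  fun p => (σ.1 p.2 + p.1, σ.2 p.2)

/-- The number of fixed points of `σ ∈ C_n ≀ S_r` acting on `B(n,r)`. -/
noncomputable def fixCount (n r : ℕ) (σ : (Fin r → ZMod n) × Equiv.Perm (Fin r)) : ℕ :=
  Nat.card {p : ZMod n × Fin r // wAct n r σ p = p}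

/-!
For `σ = (ζ, π)` let `k(σ)` be the number of coordinates `i` with `π i = i` and `ζ i = 0`
(the set `fixedCoords σ`). The points fixed by `σ` are exactly the `(z, i)` with such an `i`,
so `|Fix σ| = n k(σ)`.
Expanding `k^m = ∑ᵢ S(m,i) k(k-1)⋯(k-i+1)` reduces the claim to averaging falling factorials:
`k(k-1)⋯(k-i+1)` counts injective `i`-tuples of such coordinates, and by double counting,
since an injective `i`-tuple of `Fin r` consists of such coordinates for exactly
`n^(r-i) (r-i)!` elements `σ`, the average is `n^(-i)` when `i ≤ r` and `0` otherwise.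
-/

open Finset

theorem stirling2_eq_stirlingSecond : ∀ m i, stirling2 m i = Nat.stirlingSecond m i
  | 0, 0 | 0, _ + 1 | _ + 1, 0 => rfl
  | m + 1, i + 1 => by
    rw [stirling2, Nat.stirlingSecond_succ_succ, stirling2_eq_stirlingSecond m (i + 1),
      stirling2_eq_stirlingSecond m i]

theorem Nat.mul_descFactorial (k i : ℕ) :
    k * k.descFactorial i = k.descFactorial (i + 1) + i * k.descFactorial i := by
  rcases lt_or_ge k i with hki | hik
  · simp [Nat.descFactorial_eq_zero_iff_lt.2 hki]
  · rw [Nat.descFactorial_succ, ← add_mul, Nat.sub_add_cancel hik]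

theorem Nat.pow_eq_sum_stirlingSecond_mul_descFactorial (k m : ℕ) :
    k ^ m = ∑ i ∈ range (m + 1), stirlingSecond m i * k.descFactorial i := by
  induction m with
  | zero => simp
  | succ m ih =>
    have hshift :
        ∑ i ∈ range (m + 1), (i + 1) * stirlingSecond m (i + 1) * k.descFactorial (i + 1)
          = ∑ i ∈ range (m + 1), i * stirlingSecond m i * k.descFactorial i := by
      rw [sum_range_succ, stirlingSecond_eq_zero_of_lt m.lt_succ_self, sum_range_succ' _ m]
      simp
    calc k ^ (m + 1) = ∑ i ∈ range (m + 1), stirlingSecond m i * (k * k.descFactorial i) := by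
          rw [pow_succ', ih, mul_sum]
          exact sum_congr rfl fun i _ => mul_left_comm _ _ _
      _ = ∑ i ∈ range (m + 1), stirlingSecond m i * k.descFactorial (i + 1)
            + ∑ i ∈ range (m + 1),
                (i + 1) * stirlingSecond m (i + 1) * k.descFactorial (i + 1) := by
          rw [hshift, ← sum_add_distrib]
          refine sum_congr rfl fun i _ => ?_
          rw [mul_descFactorial]
          ring
      _ = ∑ i ∈ range (m + 2), stirlingSecond (m + 1) i * k.descFactorial i := by
          rw [sum_range_succ' _ (m + 1), ← sum_add_distrib]
          simp only [stirlingSecond_succ_succ, stirlingSecond_succ_zero, zero_mul, add_zero]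
          refine sum_congr rfl fun i _ => ?_
          ring

theorem Finset.card_filter_embedding_forall_mem {α : Type*} [Fintype α] [DecidableEq α]
    (s : Finset α) (i : ℕ) :
    #{f : Fin i ↪ α | ∀ j, f j ∈ s} = (#s).descFactorial i := by
  rw [← Fintype.card_subtype, ← Fintype.card_coe s,
    show (Fintype.card s).descFactorial i = Fintype.card (Fin i ↪ s) by simp]
  exact Fintype.card_congr
    { toFun f := f.1.codRestrict (s : Set α) f.2
      invFun g := ⟨g.trans (Function.Embedding.subtype _), fun j => (g j).2⟩
      left_inv _ := rfl
      right_inv _ := rfl }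

theorem Equiv.Perm.card_filter_forall_mem_apply_eq_self {α : Type*} [Fintype α] [DecidableEq α]
    (s : Finset α) [DecidablePred fun π : Perm α => ∀ a ∈ s, π a = a] :
    #{π : Perm α | ∀ a ∈ s, π a = a} = (Fintype.card α - #s).factorial := by
  rw [← Fintype.card_subtype, ← Fintype.card_coe s, ← Fintype.card_subtype_compl,
    ← Fintype.card_perm]
  refine Fintype.card_congr ((Equiv.subtypeEquivRight fun π => ?_).trans
    (Perm.subtypeEquivSubtypePerm (· ∉ s)).symm)
  simp only [not_not]

theorem Finset.card_filter_pi_forall_mem_eq_zero {ι M : Type*} [Fintype ι] [DecidableEq ι]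
    [Fintype M] [Zero M] (s : Finset ι) [DecidablePred fun ζ : ι → M => ∀ i ∈ s, ζ i = 0] :
    #{ζ : ι → M | ∀ i ∈ s, ζ i = 0} = Fintype.card M ^ (Fintype.card ι - #s) := by
  have hpi : ({ζ : ι → M | ∀ i ∈ s, ζ i = 0} : Finset _)
      = Fintype.piFinset fun i => if i ∈ s then {0} else univ := by
    ext ζ
    simp only [mem_filter, mem_univ, true_and, Fintype.mem_piFinset]
    refine ⟨fun h i => ?_, fun h i hi => by simpa [hi] using h i⟩
    split_ifs with hi <;> simp [h i, *]
  rw [hpi, Fintype.card_piFinset]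
  simp only [apply_ite Finset.card, card_singleton, card_univ]
  rw [prod_ite, prod_const_one, one_mul, prod_const, filter_not,
    card_sdiff_of_subset (filter_subset _ _), filter_mem_eq_inter, univ_inter, card_univ]

section Wreath

variable {n r : ℕ}

def fixedCoords (σ : (Fin r → ZMod n) × Equiv.Perm (Fin r)) : Finset (Fin r) :=
  {i | σ.2 i = i ∧ σ.1 i = 0}

theorem wAct_eq_self_iff (σ : (Fin r → ZMod n) × Equiv.Perm (Fin r)) (p : ZMod n × Fin r) :
    wAct n r σ p = p ↔ p.2 ∈ fixedCoords σ := by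
  simp only [wAct, Prod.ext_iff, add_eq_right, fixedCoords, mem_filter, mem_univ, true_and]
  exact and_comm

variable [NeZero n]

theorem fixCount_eq_mul_card_fixedCoords (σ : (Fin r → ZMod n) × Equiv.Perm (Fin r)) :
    fixCount n r σ = n * #(fixedCoords σ) := by
  have hfix (p : ZMod n × Fin r) : wAct n r σ p = p ↔ p ∈ univ ×ˢ fixedCoords σ := by
    rw [wAct_eq_self_iff, mem_product, and_iff_right (mem_univ _)]
  rw [fixCount, Nat.card_congr (Equiv.subtypeEquivRight hfix), Nat.card_eq_finsetCard,
    card_product, card_univ, ZMod.card]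

theorem card_filter_subset_fixedCoords (s : Finset (Fin r)) :
    #{σ : (Fin r → ZMod n) × Equiv.Perm (Fin r) | s ⊆ fixedCoords σ}
      = n ^ (r - #s) * (r - #s).factorial := by
  have hprod : univ.filter (fun σ : (Fin r → ZMod n) × Equiv.Perm (Fin r) => s ⊆ fixedCoords σ)
      = univ.filter (fun ζ : Fin r → ZMod n => ∀ i ∈ s, ζ i = 0)
        ×ˢ univ.filter (fun π : Equiv.Perm (Fin r) => ∀ i ∈ s, π i = i) := by
    ext σ
    simp only [subset_iff, fixedCoords, mem_filter, mem_univ, true_and, mem_product, forall_and]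
    exact and_comm
  rw [hprod, card_product, card_filter_pi_forall_mem_eq_zero,
    Equiv.Perm.card_filter_forall_mem_apply_eq_self, ZMod.card, Fintype.card_fin]

theorem sum_descFactorial_card_fixedCoords_of_lt {i : ℕ} (hri : r < i) :
    ∑ σ : (Fin r → ZMod n) × Equiv.Perm (Fin r), (#(fixedCoords σ)).descFactorial i = 0 :=
  sum_eq_zero fun σ _ => Nat.descFactorial_eq_zero_iff_lt.2 <|
    (card_le_univ _).trans_lt (by rwa [Fintype.card_fin])

theorem sum_descFactorial_card_fixedCoords {i : ℕ} (hi : i ≤ r) :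
    ∑ σ : (Fin r → ZMod n) × Equiv.Perm (Fin r), (#(fixedCoords σ)).descFactorial i
      = r.factorial * n ^ (r - i) := by
  calc ∑ σ : (Fin r → ZMod n) × Equiv.Perm (Fin r), (#(fixedCoords σ)).descFactorial i
      = ∑ f : Fin i ↪ Fin r, #{σ : (Fin r → ZMod n) × Equiv.Perm (Fin r) |
          univ.map f ⊆ fixedCoords σ} := by
        simp only [← card_filter_embedding_forall_mem, card_filter]
        rw [sum_comm]
        simp [subset_iff]
    _ = r.descFactorial i * (n ^ (r - i) * (r - i).factorial) := by
        simp only [card_filter_subset_fixedCoords, card_map, card_univ, Fintype.card_fin,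
          sum_const, Fintype.card_embedding_eq, smul_eq_mul]
    _ = r.factorial * n ^ (r - i) := by
        rw [← Nat.factorial_mul_descFactorial hi]
        ring

theorem sum_fixCount_pow (m : ℕ) :
    ∑ σ : (Fin r → ZMod n) × Equiv.Perm (Fin r), fixCount n r σ ^ m
      = r.factorial * n ^ r *
          ∑ i ∈ range (min m r + 1), Nat.stirlingSecond m i * n ^ (m - i) := by
  have hvanish : ∀ i ∈ range (m + 1), i ∉ range (min m r + 1) →
      Nat.stirlingSecond m i * ∑ σ : (Fin r → ZMod n) × Equiv.Perm (Fin r),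
        (#(fixedCoords σ)).descFactorial i = 0 := by
    intro i him hi
    simp only [mem_range] at him hi
    rw [sum_descFactorial_card_fixedCoords_of_lt (by omega), mul_zero]
  calc ∑ σ : (Fin r → ZMod n) × Equiv.Perm (Fin r), fixCount n r σ ^ m
      = n ^ m * ∑ σ : (Fin r → ZMod n) × Equiv.Perm (Fin r), #(fixedCoords σ) ^ m := by
        simp only [fixCount_eq_mul_card_fixedCoords, mul_pow, mul_sum]
    _ = n ^ m * ∑ i ∈ range (m + 1), Nat.stirlingSecond m i *
          ∑ σ : (Fin r → ZMod n) × Equiv.Perm (Fin r), (#(fixedCoords σ)).descFactorial i := by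
        rw [sum_congr rfl fun σ _ => Nat.pow_eq_sum_stirlingSecond_mul_descFactorial _ m, sum_comm]
        simp only [mul_sum]
    _ = n ^ m * ∑ i ∈ range (min m r + 1),
          Nat.stirlingSecond m i * (r.factorial * n ^ (r - i)) := by
        rw [← sum_subset (range_subset_range.2 (by omega)) hvanish]
        refine congrArg _ (sum_congr rfl fun i hi => ?_)
        rw [sum_descFactorial_card_fixedCoords (by simp only [mem_range] at hi; omega)]
    _ = r.factorial * n ^ r *
          ∑ i ∈ range (min m r + 1), Nat.stirlingSecond m i * n ^ (m - i) := by
        rw [mul_sum, mul_sum]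
        refine sum_congr rfl fun i hi => ?_
        simp only [mem_range] at hi
        rw [← pow_sub_mul_pow n (show i ≤ m by omega), ← pow_sub_mul_pow n (show i ≤ r by omega)]
        ring

end Wreath

theorem stmt1_general (m n r : ℕ) [NeZero n] :
    (1 / ((r.factorial * n ^ r : ℕ) : ℝ)) *
      ∑ σ : (Fin r → ZMod n) × Equiv.Perm (Fin r), ((fixCount n r σ : ℝ)) ^ m
      = ∑ i ∈ Finset.range (min m r + 1), (stirling2 m i : ℝ) * (n : ℝ) ^ (m - i) := by
  have hW : ((r.factorial * n ^ r : ℕ) : ℝ) ≠ 0 := by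
    exact_mod_cast mul_ne_zero r.factorial_ne_zero (pow_ne_zero r (NeZero.ne n))
  have hsum := congrArg (Nat.cast : ℕ → ℝ) (sum_fixCount_pow (n := n) (r := r) m)
  push_cast at hW hsum ⊢
  rw [hsum, one_div, inv_mul_cancel_left₀ hW]
  simp only [stirling2_eq_stirlingSecond]

theorem stmt1 (m n r : ℕ) [NeZero n] (hr : 1 ≤ r) :
    (1 / ((r.factorial * n ^ r : ℕ) : ℝ)) *
      ∑ σ : (Fin r → ZMod n) × Equiv.Perm (Fin r), ((fixCount n r σ : ℝ)) ^ m
      = ∑ i ∈ Finset.range (min m r + 1), (stirling2 m i : ℝ) * (n : ℝ) ^ (m - i) :=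
  stmt1_general m n r
end

section
/- Let n, r ≥ 1 and 0 ≤ j ≤ r be integers. Then the number of elements σ of the wreath product W(n,r) with exactly n·j fixed points on B(n,r) is given exactly by |{σ ∈ W(n,r) : |Fix(σ)| = n·j}| = Σ_{i=j}^{r} C(i,j) · D_{r,i} · (n−1)^{i−j} · n^{r−i}, where C(i,j) is the binomial coefficient. -/
open Finset

/-- The rencontres number `D_{r,i}`: the number of permutations of an
`r`-element set with exactly `i` fixed points. -/
noncomputable def rencontres (r i : ℕ) : ℕ :=
  Nat.card {π : Equiv.Perm (Fin r) // Nat.card {x : Fin r // π x = x} = i}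

section aux

variable {n r : ℕ} [NeZero n]

lemma fixCount_eq (σ : (Fin r → ZMod n) × Equiv.Perm (Fin r)) :
    fixCount n r σ = n * (univ.filter fun i => σ.2 i = i ∧ σ.1 i = 0).card := by
  have e1 : {p : ZMod n × Fin r // wAct n r σ p = p} ≃
      {p : ZMod n × Fin r // σ.2 p.2 = p.2 ∧ σ.1 p.2 = 0} := by
    apply Equiv.subtypeEquivRight
    intro p
    constructor
    · intro h
      have h1 : σ.1 p.2 + p.1 = p.1 := congrArg Prod.fst h
      have h2 : σ.2 p.2 = p.2 := congrArg Prod.snd h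
      exact ⟨h2, by simpa using h1⟩
    · intro ⟨h2, h1⟩
      simp [wAct, h1, h2]
  have e2 : {p : ZMod n × Fin r // σ.2 p.2 = p.2 ∧ σ.1 p.2 = 0} ≃
      ZMod n × {i : Fin r // σ.2 i = i ∧ σ.1 i = 0} :=
    ⟨fun p => (p.1.1, ⟨p.1.2, p.2⟩), fun q => ⟨(q.1, q.2.1), q.2.2⟩,
      fun p => rfl, fun q => rfl⟩
  rw [fixCount, Nat.card_congr (e1.trans e2), Nat.card_prod, Nat.card_zmod,
    Nat.card_eq_fintype_card, Fintype.card_subtype]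

/-- Count of functions with exactly `j` zeros on a given set `s`. -/
lemma count_funs (s : Finset (Fin r)) (j : ℕ) :
    (univ.filter fun f : Fin r → ZMod n => (s.filter fun i => f i = 0).card = j).card
      = s.card.choose j * (n - 1) ^ (s.card - j) * n ^ (r - s.card) := by
  classical
  have hmaps : ∀ f ∈ (univ.filter fun f : Fin r → ZMod n =>
      (s.filter fun i => f i = 0).card = j),
      (s.filter fun i => f i = 0) ∈ s.powersetCard j := by
    intro f hf
    rw [mem_filter] at hf
    exact mem_powersetCard.2 ⟨filter_subset _ _, hf.2⟩
  rw [card_eq_sum_card_fiberwise hmaps]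
  have hfib : ∀ t ∈ s.powersetCard j,
      ((univ.filter fun f : Fin r → ZMod n => (s.filter fun i => f i = 0).card = j).filter
        (fun f => (s.filter fun i => f i = 0) = t)).card
        = (n - 1) ^ (s.card - j) * n ^ (r - s.card) := by
    intro t ht
    rw [mem_powersetCard] at ht
    obtain ⟨hts, htj⟩ := ht
    -- simplify the double filter
    have hset : ((univ.filter fun f : Fin r → ZMod n =>
        (s.filter fun i => f i = 0).card = j).filter
        (fun f => (s.filter fun i => f i = 0) = t))
        = univ.filter (fun f : Fin r → ZMod n =>
            ∀ i, if i ∈ t then f i = 0 else if i ∈ s then f i ≠ 0 else True) := by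
      ext f
      simp only [mem_filter, mem_univ, true_and]
      constructor
      · rintro ⟨-, hft⟩
        intro i
        by_cases hit : i ∈ t
        · simp only [hit, if_pos]
          have : i ∈ s.filter fun i => f i = 0 := hft ▸ hit
          exact (mem_filter.1 this).2
        · simp only [hit, if_neg, if_false]
          by_cases his : i ∈ s
          · simp only [his, if_pos]
            intro h0
            exact hit (hft ▸ mem_filter.2 ⟨his, h0⟩)
          · simp [his]
      · intro h
        have heq : (s.filter fun i => f i = 0) = t := by
          ext i
          rw [mem_filter]
          constructor
          · rintro ⟨his, h0⟩
            by_contra hit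
            have := h i
            simp only [hit, if_neg, his, if_pos] at this
            exact this h0
          · intro hit
            refine ⟨hts hit, ?_⟩
            have := h i
            simpa [hit] using this
        exact ⟨heq ▸ htj, heq⟩
    rw [hset]
    -- compute the cardinality as a product
    rw [← Fintype.card_subtype]
    rw [Fintype.card_congr (Equiv.subtypePiEquivPi
      (p := fun i (b : ZMod n) => if i ∈ t then b = 0 else if i ∈ s then b ≠ 0 else True))]
    rw [Fintype.card_pi]
    have hterm : ∀ i : Fin r, Fintype.card {b : ZMod n //
        if i ∈ t then b = 0 else if i ∈ s then b ≠ 0 else True}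
        = if i ∈ t then 1 else if i ∈ s then n - 1 else n := by
      intro i
      by_cases hit : i ∈ t
      · simp only [hit, if_pos]
        exact Fintype.card_subtype_eq (0 : ZMod n)
      · by_cases his : i ∈ s
        · simp only [hit, his, if_neg, if_false, if_pos]
          have : Fintype.card {b : ZMod n // ¬ b = 0}
              = Fintype.card (ZMod n) - Fintype.card {b : ZMod n // b = 0} :=
            Fintype.card_subtype_compl _
          rw [this, Fintype.card_subtype_eq (0 : ZMod n), ZMod.card]
        · simp only [hit, his, if_neg, if_false]
          rw [Fintype.card_subtype]
          simp [ZMod.card]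
    rw [Finset.prod_congr rfl (fun i _ => hterm i)]
    have hsplit : ∀ g : Fin r → ℕ, (∏ i ∈ s, g i) * ∏ i ∈ sᶜ, g i = ∏ i, g i :=
      fun g => Finset.prod_mul_prod_compl s g
    rw [← hsplit]
    have h1 : (∏ i ∈ sᶜ, if i ∈ t then 1 else if i ∈ s then n - 1 else n) = n ^ (r - s.card) := by
      rw [Finset.prod_congr rfl (g := fun _ => n) ?_, Finset.prod_const, Finset.card_compl,
        Fintype.card_fin]
      intro i hi
      rw [Finset.mem_compl] at hi
      have hit : i ∉ t := fun h => hi (hts h)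
      simp [hi, hit]
    have h2 : (∏ i ∈ s, if i ∈ t then 1 else if i ∈ s then n - 1 else n)
        = (n - 1) ^ (s.card - j) := by
      rw [← Finset.prod_sdiff hts]
      have ha : (∏ i ∈ s \ t, if i ∈ t then 1 else if i ∈ s then n - 1 else n)
          = (n - 1) ^ (s.card - j) := by
        rw [Finset.prod_congr rfl (g := fun _ => n - 1) ?_, Finset.prod_const,
          Finset.card_sdiff_of_subset hts, htj]
        intro i hi
        rw [Finset.mem_sdiff] at hi
        simp [hi.1, hi.2]
      have hb : (∏ i ∈ t, if i ∈ t then 1 else if i ∈ s then n - 1 else n) = 1 := by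
        rw [Finset.prod_congr rfl (g := fun _ => 1) ?_, Finset.prod_const, one_pow]
        intro i hi
        simp [hi]
      rw [ha, hb, mul_one]
    rw [h1, h2]
  rw [Finset.sum_congr rfl hfib, Finset.sum_const, Finset.card_powersetCard, smul_eq_mul]
  ring

end aux

lemma rencontres_eq (r i : ℕ) :
    rencontres r i
      = (univ.filter fun π : Equiv.Perm (Fin r) =>
          (univ.filter fun x => π x = x).card = i).card := by
  classical
  rw [rencontres, Nat.card_eq_fintype_card, Fintype.card_subtype]
  apply Finset.card_bij (fun π _ => π) <;> try (intro a b _ _ h; exact h)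
  · intro π hπ
    rw [mem_filter] at hπ ⊢
    refine ⟨mem_univ _, ?_⟩
    rw [← hπ.2, Nat.card_eq_fintype_card, Fintype.card_subtype]
  · intro π hπ
    rw [mem_filter] at hπ
    refine ⟨π, ?_, rfl⟩
    rw [mem_filter]
    refine ⟨mem_univ _, ?_⟩
    rw [Nat.card_eq_fintype_card, Fintype.card_subtype, hπ.2]

theorem stmt4 (n r j : ℕ) (hn : 1 ≤ n) (hr : 1 ≤ r) (hj : j ≤ r) :
    Nat.card {σ : (Fin r → ZMod n) × Equiv.Perm (Fin r) // fixCount n r σ = n * j}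
      = ∑ i ∈ Finset.Icc j r,
          Nat.choose i j * rencontres r i * (n - 1) ^ (i - j) * n ^ (r - i) := by
  classical
  haveI : NeZero n := ⟨by omega⟩
  rw [Nat.card_eq_fintype_card]
  have e : {σ : (Fin r → ZMod n) × Equiv.Perm (Fin r) // fixCount n r σ = n * j} ≃
      Σ π : Equiv.Perm (Fin r), {f : Fin r → ZMod n // fixCount n r (f, π) = n * j} :=
    ⟨fun x => ⟨x.1.2, ⟨x.1.1, x.2⟩⟩, fun y => ⟨(y.2.1, y.1), y.2.2⟩,
      fun x => rfl, fun y => rfl⟩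
  rw [Fintype.card_congr e, Fintype.card_sigma]
  set c : Equiv.Perm (Fin r) → ℕ := fun π => (univ.filter fun x => π x = x).card with hc
  have key : ∀ π : Equiv.Perm (Fin r),
      Fintype.card {f : Fin r → ZMod n // fixCount n r (f, π) = n * j}
        = (c π).choose j * (n - 1) ^ (c π - j) * n ^ (r - c π) := by
    intro π
    rw [Fintype.card_subtype]
    have hiff : ∀ f : Fin r → ZMod n, (fixCount n r (f, π) = n * j) ↔
        (((univ.filter fun x => π x = x).filter fun i => f i = 0).card = j) := by
      intro f
      rw [fixCount_eq, mul_right_inj' (by omega : n ≠ 0), Finset.filter_filter]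
    rw [Finset.filter_congr (fun f _ => hiff f), count_funs]
  rw [Finset.sum_congr rfl (fun π _ => key π)]
  have hmaps : ∀ π ∈ (univ : Finset (Equiv.Perm (Fin r))), c π ∈ Finset.range (r + 1) := by
    intro π _
    rw [Finset.mem_range]
    have h := Finset.card_filter_le (univ : Finset (Fin r)) (fun x => π x = x)
    simp only [Finset.card_univ, Fintype.card_fin] at h
    have hck : c π = (univ.filter fun x => π x = x).card := rfl
    omega
  rw [← Finset.sum_fiberwise_of_maps_to hmaps
    (fun π => (c π).choose j * (n - 1) ^ (c π - j) * n ^ (r - c π))]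
  have inner : ∀ k ∈ Finset.range (r + 1),
      (∑ π ∈ univ.filter (fun π => c π = k),
        (c π).choose j * (n - 1) ^ (c π - j) * n ^ (r - c π))
        = rencontres r k * (k.choose j * (n - 1) ^ (k - j) * n ^ (r - k)) := by
    intro k _
    rw [Finset.sum_congr rfl (g := fun _ => k.choose j * (n - 1) ^ (k - j) * n ^ (r - k))
      (fun π hπ => by rw [mem_filter] at hπ; rw [hπ.2]),
      Finset.sum_const, smul_eq_mul, ← rencontres_eq]
  rw [Finset.sum_congr rfl inner]
  have hsub : Finset.Icc j r ⊆ Finset.range (r + 1) := by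
    intro k hk
    rw [Finset.mem_Icc] at hk
    rw [Finset.mem_range]
    omega
  rw [← Finset.sum_subset hsub ?hz]
  · exact Finset.sum_congr rfl (fun k _ => by ring)
  · intro k hk hk2
    rw [Finset.mem_range] at hk
    rw [Finset.mem_Icc] at hk2
    have hkj : k < j := by omega
    rw [Nat.choose_eq_zero_of_lt hkj]
    ring
end

section
/- Let n, r ≥ 1 and j ≥ 0 be integers. If j ≤ r, then |ω_{n,r}(j) − e^{−1/n}/(j!·n^j)| < (1 + 2^{r−j})/(j!·n^j·(r−j)!). If j > r, then ω_{n,r}(j) = 0. -/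
/-- `ω_{n,r}(j)`: the proportion of elements `σ` of `C_n ≀ S_r` with exactly
`j·n` fixed points on `B(n,r)`. -/
noncomputable def omega (n r j : ℕ) : ℝ :=
  (Nat.card {σ : (Fin r → ZMod n) × Equiv.Perm (Fin r) // fixCount n r σ = j * n} : ℝ)
    / ((r.factorial * n ^ r : ℕ) : ℝ)

/-!
A point `(z, i)` is fixed by `σ = (ζ, π)` exactly when `π i = i` and `ζ i = 0`, so
`|Fix σ| = n·|S(σ)|` for the set `S(σ)` of such indices. The elements with `T ⊆ S(σ)` are those
whose coordinate and permutation parts are trivial on `T`; there are `n^(r-|T|)·(r-|T|)!` of them.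
Inclusion–exclusion then gives `ω_{n,r}(j) = (j!·n^j)⁻¹ · ∑_{k ≤ r-j} (-1/n)^k / k!`, a truncation
of the exponential series of `e^{-1/n}` whose error is below `1/(r-j)!`.
-/

open Finset

theorem sum_range_choose_mul_neg_one_pow_mul_choose {R : Type*} [CommRing R] (s j : ℕ) :
    ∑ m ∈ range (s + 1), (s.choose m : R) * ((-1) ^ (m + j) * m.choose j)
      = if s = j then 1 else 0 := by
  rcases lt_or_ge s j with hsj | hjs
  · rw [if_neg hsj.ne]
    refine sum_eq_zero fun m hm => ?_
    rw [Nat.choose_eq_zero_of_lt (n := m) (k := j) (by rw [mem_range] at hm; omega)]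
    simp
  · obtain ⟨d, rfl⟩ := Nat.exists_eq_add_of_le hjs
    have hlow : ∑ m ∈ range j, (((j + d).choose m : R) * ((-1) ^ (m + j) * m.choose j)) = 0 :=
      sum_eq_zero fun m hm => by rw [Nat.choose_eq_zero_of_lt (mem_range.mp hm)]; simp
    have hshift : ∀ u ∈ range (d + 1),
        ((j + d).choose (j + u) : R) * ((-1) ^ (j + u + j) * (j + u).choose j)
          = (j + d).choose j * ((-1) ^ u * d.choose u) := by
      intro u _
      have hc := Nat.choose_mul (n := j + d) (k := j + u) (s := j) (by omega)
      simp only [add_tsub_cancel_left] at hc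
      have hcR : ((j + d).choose (j + u) : R) * (j + u).choose j
          = (j + d).choose j * d.choose u := by
        rw [← Nat.cast_mul, hc, Nat.cast_mul]
      rw [show j + u + j = 2 * j + u by omega, pow_add, pow_mul, neg_one_sq, one_pow, one_mul]
      linear_combination ((-1 : R) ^ u) * hcR
    have halt : ∑ u ∈ range (d + 1), ((-1 : R) ^ u * d.choose u) = if d = 0 then 1 else 0 := by
      simpa using congrArg (Int.cast : ℤ → R) (Int.alternating_sum_range_choose (n := d))
    rw [show j + d + 1 = j + (d + 1) by omega, sum_range_add, hlow, zero_add,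
      sum_congr rfl hshift, ← mul_sum, halt]
    rcases eq_or_ne d 0 with rfl | hd
    · simp
    · simp [hd]

theorem card_filter_card_eq {α ι R : Type*} [Fintype α] [Fintype ι] [DecidableEq ι]
    [CommRing R] (F : α → Finset ι) (j : ℕ) :
    (#{a | #(F a) = j} : R)
      = ∑ T : Finset ι, (-1 : R) ^ (#T + j) * (#T).choose j * #{a | T ⊆ F a} := by
  have hdelta : ∀ a, ∑ T ∈ (F a).powerset, ((-1 : R) ^ (#T + j) * (#T).choose j)
      = if #(F a) = j then 1 else 0 := by
    intro a
    rw [sum_powerset_apply_card (fun m => (-1 : R) ^ (m + j) * m.choose j)]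
    simp only [nsmul_eq_mul]
    exact sum_range_choose_mul_neg_one_pow_mul_choose _ _
  calc (#{a | #(F a) = j} : R)
      = ∑ a, ∑ T ∈ (F a).powerset, ((-1 : R) ^ (#T + j) * (#T).choose j) := by
        simp only [hdelta, sum_boole]
    _ = ∑ a, ∑ T : Finset ι, if T ⊆ F a then (-1 : R) ^ (#T + j) * (#T).choose j else 0 := by
        simp only [← sum_filter, filter_subset_univ]
    _ = _ := by
        rw [sum_comm]
        simp only [← sum_filter, sum_const, nsmul_eq_mul, mul_comm]

theorem card_filter_forall_mem_eq_zero {ι M : Type*} [Fintype ι] [DecidableEq ι] [Fintype M]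
    [Zero M] (T : Finset ι) [DecidablePred fun f : ι → M => ∀ i ∈ T, f i = 0] :
    #{f : ι → M | ∀ i ∈ T, f i = 0} = Fintype.card M ^ (Fintype.card ι - #T) := by
  have hpi : ({f : ι → M | ∀ i ∈ T, f i = 0} : Finset _)
      = Fintype.piFinset fun i => if i ∈ T then {0} else univ := by
    ext f
    simp only [mem_filter, mem_univ, true_and, Fintype.mem_piFinset]
    refine forall_congr' fun i => ?_
    split_ifs with hi <;> simp [hi]
  rw [hpi, Fintype.card_piFinset]
  simp only [apply_ite card, card_singleton, card_univ, prod_ite, prod_const_one, prod_const,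
    one_mul]
  rw [filter_not, filter_mem_eq_inter, univ_inter, card_sdiff_of_subset (subset_univ T), card_univ]

theorem card_filter_forall_mem_perm_apply_eq {ι : Type*} [Fintype ι] [DecidableEq ι]
    (T : Finset ι) [DecidablePred fun π : Equiv.Perm ι => ∀ i ∈ T, π i = i] :
    #{π : Equiv.Perm ι | ∀ i ∈ T, π i = i} = (Fintype.card ι - #T).factorial := by
  rw [← Fintype.card_subtype]
  have e : {π : Equiv.Perm ι // ∀ i ∈ T, π i = i} ≃ Equiv.Perm {i // i ∉ T} :=
    (Equiv.subtypeEquivRight fun π => by simp only [not_not]).trans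
      (Equiv.Perm.subtypeEquivSubtypePerm (· ∉ T)).symm
  rw [Fintype.card_congr e, Fintype.card_perm, Fintype.card_subtype_compl, Fintype.card_coe]

theorem choose_add_mul_neg_one_pow_div {n r j k : ℕ} (hn : n ≠ 0) (h : j + k ≤ r) :
    (r.choose (j + k) : ℝ) * ((-1) ^ (j + k + j) * (j + k).choose j *
        (n ^ (r - (j + k)) * (r - (j + k)).factorial)) / (r.factorial * n ^ r)
      = (-(1 / n)) ^ k / k.factorial / (j.factorial * n ^ j) := by
  obtain ⟨m, rfl⟩ := Nat.exists_eq_add_of_le h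
  have hfac : ((j + k + m).choose (j + k) : ℝ) * (j + k).choose j * j.factorial * k.factorial
      * m.factorial = (j + k + m).factorial := by
    have h1 := Nat.choose_mul_factorial_mul_factorial (Nat.le_add_right (j + k) m)
    have h2 := Nat.choose_mul_factorial_mul_factorial (Nat.le_add_right j k)
    simp only [add_tsub_cancel_left] at h1 h2
    rw [← h1, ← h2]
    push_cast
    ring
  have hsign : (-1 : ℝ) ^ (j + k + j) = (-1) ^ k := by
    rw [show j + k + j = 2 * j + k by omega, pow_add, pow_mul, neg_one_sq, one_pow, one_mul]
  have hchoose : ((j + k + m).choose (j + k) : ℝ) ≠ 0 := by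
    exact_mod_cast (Nat.choose_pos h).ne'
  have hchoose' : ((j + k).choose j : ℝ) ≠ 0 := by
    exact_mod_cast (Nat.choose_pos (Nat.le_add_right j k)).ne'
  rw [add_tsub_cancel_left, hsign, ← hfac, neg_div', div_pow, pow_add, pow_add]
  field_simp

theorem abs_sum_range_neg_pow_div_factorial_sub_exp_neg_lt {x : ℝ} (hx₀ : 0 ≤ x)
    (hx₁ : x ≤ 1) (m : ℕ) :
    |∑ k ∈ range (m + 1), (-x) ^ k / k.factorial - Real.exp (-x)| < 1 / m.factorial := by
  rcases Nat.eq_zero_or_pos m with rfl | hm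
  · have h1 : Real.exp (-x) ≤ 1 := Real.exp_le_one_iff.mpr (by linarith)
    have h2 : 0 < Real.exp (-x) := Real.exp_pos _
    rw [sum_range_one, pow_zero, Nat.factorial_zero, Nat.cast_one, div_one,
      abs_of_nonneg (by linarith)]
    linarith
  · have hbound := Real.exp_bound (x := -x) (by rwa [abs_neg, abs_of_nonneg hx₀])
      (Nat.succ_pos m)
    rw [abs_neg, abs_of_nonneg hx₀, abs_sub_comm] at hbound
    refine hbound.trans_lt ?_
    have hxm : x ^ (m + 1) ≤ 1 := pow_le_one₀ hx₀ hx₁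
    rw [Nat.factorial_succ]
    push_cast
    rw [lt_div_iff₀ (by positivity)]
    calc x ^ (m + 1) * ((m + 1 + 1) / ((m + 1) * m.factorial * (m + 1))) * m.factorial
        = x ^ (m + 1) * ((m + 2) / ((m + 1) * (m + 1))) := by field_simp; ring
      _ ≤ (m + 2) / ((m + 1) * (m + 1)) := mul_le_of_le_one_left (by positivity) hxm
      _ < 1 := by
        rw [div_lt_one (by positivity)]
        nlinarith [show (1 : ℝ) ≤ m by exact_mod_cast hm]

section Wreath

variable {n r : ℕ}

def fixedIndices (σ : (Fin r → ZMod n) × Equiv.Perm (Fin r)) : Finset (Fin r) :=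
  {i | σ.2 i = i ∧ σ.1 i = 0}

theorem fixCount_eq_mul_card_fixedIndices [NeZero n]
    (σ : (Fin r → ZMod n) × Equiv.Perm (Fin r)) :
    fixCount n r σ = n * #(fixedIndices σ) := by
  have hfix : ({p | wAct n r σ p = p} : Finset (ZMod n × Fin r)) = univ ×ˢ fixedIndices σ := by
    ext ⟨z, i⟩
    simp only [mem_filter, mem_univ, true_and, mem_product, wAct, fixedIndices, Prod.ext_iff,
      add_eq_right]
    exact and_comm
  rw [fixCount, Nat.card_eq_fintype_card, Fintype.card_subtype, hfix, card_product, card_univ,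
    ZMod.card]

theorem card_filter_subset_fixedIndices [NeZero n] (T : Finset (Fin r)) :
    #{σ : (Fin r → ZMod n) × Equiv.Perm (Fin r) | T ⊆ fixedIndices σ}
      = n ^ (r - #T) * (r - #T).factorial := by
  have hprod : ({σ | T ⊆ fixedIndices σ} : Finset ((Fin r → ZMod n) × Equiv.Perm (Fin r)))
      = ({f | ∀ i ∈ T, f i = 0} : Finset (Fin r → ZMod n)) ×ˢ
          ({π | ∀ i ∈ T, π i = i} : Finset (Equiv.Perm (Fin r))) := by
    ext ⟨f, π⟩
    simp [subset_iff, fixedIndices, forall_and, and_comm]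
  rw [hprod, card_product]
  simp only [card_filter_forall_mem_eq_zero, card_filter_forall_mem_perm_apply_eq,
    ZMod.card, Fintype.card_fin]

theorem card_filter_card_fixedIndices_eq [NeZero n] (j : ℕ) :
    (#{σ : (Fin r → ZMod n) × Equiv.Perm (Fin r) | #(fixedIndices σ) = j} : ℝ)
      = ∑ t ∈ range (r + 1),
          r.choose t * ((-1 : ℝ) ^ (t + j) * t.choose j * (n ^ (r - t) * (r - t).factorial)) := by
  rw [card_filter_card_eq]
  simp only [card_filter_subset_fixedIndices]
  rw [← powerset_univ, sum_powerset_apply_card (fun t => (-1 : ℝ) ^ (t + j) * t.choose j *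
    ((n ^ (r - t) * (r - t).factorial : ℕ) : ℝ)), card_univ, Fintype.card_fin]
  push_cast
  simp only [nsmul_eq_mul]

theorem natCard_fixCount_eq_mul [NeZero n] (j : ℕ) :
    Nat.card {σ : (Fin r → ZMod n) × Equiv.Perm (Fin r) // fixCount n r σ = j * n}
      = #{σ : (Fin r → ZMod n) × Equiv.Perm (Fin r) | #(fixedIndices σ) = j} := by
  rw [Nat.card_eq_fintype_card, Fintype.card_subtype]
  refine congrArg card (filter_congr fun σ _ => ?_)
  rw [fixCount_eq_mul_card_fixedIndices, mul_comm j, Nat.mul_left_cancel_iff (NeZero.pos n)]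

theorem omega_eq_sum [NeZero n] {j : ℕ} (hj : j ≤ r) :
    omega n r j
      = (∑ k ∈ range (r - j + 1), (-(1 / n : ℝ)) ^ k / k.factorial)
          / (j.factorial * n ^ j) := by
  have hlow : ∑ t ∈ range j, (r.choose t : ℝ) *
      ((-1) ^ (t + j) * t.choose j * (n ^ (r - t) * (r - t).factorial)) = 0 :=
    sum_eq_zero fun t ht => by rw [Nat.choose_eq_zero_of_lt (mem_range.mp ht)]; simp
  rw [omega, natCard_fixCount_eq_mul, card_filter_card_fixedIndices_eq,
    show r + 1 = j + (r - j + 1) by omega, sum_range_add, hlow, zero_add, sum_div, sum_div]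
  push_cast
  exact sum_congr rfl fun k hk =>
    choose_add_mul_neg_one_pow_div (NeZero.ne n) (by rw [mem_range] at hk; omega)

theorem omega_eq_zero [NeZero n] {j : ℕ} (hrj : r < j) : omega n r j = 0 := by
  have hempty : ({σ | #(fixedIndices σ) = j} : Finset ((Fin r → ZMod n) × Equiv.Perm (Fin r)))
      = ∅ := by
    refine filter_false_of_mem fun σ _ => (lt_of_le_of_lt ?_ hrj).ne
    simpa using card_le_univ (fixedIndices σ)
  rw [omega, natCard_fixCount_eq_mul, hempty, card_empty, Nat.cast_zero, zero_div]

end Wreath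

theorem stmt5_general (n r j : ℕ) (hn : 1 ≤ n) :
    (j ≤ r →
      |omega n r j - Real.exp (-(1 / (n : ℝ))) / ((j.factorial : ℝ) * (n : ℝ) ^ j)|
        < (1 + 2 ^ (r - j)) / ((j.factorial : ℝ) * (n : ℝ) ^ j * ((r - j).factorial : ℝ))) ∧
    (j > r → omega n r j = 0) := by
  have : NeZero n := ⟨by omega⟩
  refine ⟨fun hj => ?_, omega_eq_zero⟩
  have hx₀ : (0 : ℝ) ≤ 1 / n := by positivity
  have hx₁ : 1 / (n : ℝ) ≤ 1 := div_le_one_of_le₀ (by exact_mod_cast hn) (by positivity)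
  have hD : (0 : ℝ) < j.factorial * n ^ j := by positivity
  rw [omega_eq_sum hj, ← sub_div, abs_div, abs_of_pos hD, div_lt_iff₀ hD]
  calc _ < 1 / ((r - j).factorial : ℝ) :=
        abs_sum_range_neg_pow_div_factorial_sub_exp_neg_lt hx₀ hx₁ (r - j)
    _ ≤ (1 + 2 ^ (r - j)) / (r - j).factorial := by gcongr; simp
    _ = _ := by field_simp

theorem stmt5 (n r j : ℕ) (hn : 1 ≤ n) (hr : 1 ≤ r) :
    (j ≤ r →
      |omega n r j - Real.exp (-(1 / (n : ℝ))) / ((j.factorial : ℝ) * (n : ℝ) ^ j)|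
        < (1 + 2 ^ (r - j)) / ((j.factorial : ℝ) * (n : ℝ) ^ j * ((r - j).factorial : ℝ))) ∧
    (j > r → omega n r j = 0) :=
  stmt5_general n r j hn
end

section
/- Let f ∈ ℤ[x], let n ≥ 1 be an integer, and suppose that the polynomial f^n(x) − x (where f^n denotes the n-fold composition of f with itself) has no repeated roots in an algebraic closure of ℚ. Let Φ ∈ ℤ[x] be a polynomial satisfying Φ(x) · ∏_{d ∣ n, μ(n/d) = −1} (f^d(x) − x) = ∏_{d ∣ n, μ(n/d) = 1} (f^d(x) − x) (i.e. Φ is the n-th dynatomic polynomial of f). Then for every integer j ≥ 0, for all but finitely many primes p the following equivalence holds: the dynamical system (F_p, [f]_p) has exactly j n-cycles if and only if the reduction [Φ]_p has exactly j·n roots in F_p. -/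
/-- `polyIter f n` is the `n`-fold composition `f^n(x)` of the polynomial `f`
with itself (with `f^0(x) = x`). -/
noncomputable def polyIter (f : Polynomial ℤ) : ℕ → Polynomial ℤ
  | 0 => Polynomial.X
  | n + 1 => (polyIter f n).comp f

open Polynomial

lemma polyIter_add (f : Polynomial ℤ) (a b : ℕ) :
    polyIter f (a + b) = (polyIter f a).comp (polyIter f b) := by
  induction b with
  | zero => simp [polyIter]
  | succ b ih =>
      show polyIter f (a + b + 1) = _
      rw [show polyIter f (a + b + 1) = (polyIter f (a + b)).comp f from rfl, ih,
        show polyIter f (b + 1) = (polyIter f b).comp f from rfl, Polynomial.comp_assoc]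

lemma comp_sub_dvd (A h : Polynomial ℤ) : (h - Polynomial.X) ∣ A.comp h - A := by
  induction A using Polynomial.induction_on' with
  | add p q hp hq =>
      have := dvd_add hp hq
      have heq : p.comp h - p + (q.comp h - q) = (p + q).comp h - (p + q) := by
        rw [add_comp]; ring
      rwa [heq] at this
  | monomial m a =>
      rw [← C_mul_X_pow_eq_monomial, mul_comp, C_comp, X_pow_comp, ← mul_sub]
      exact Dvd.dvd.mul_left (sub_dvd_pow_sub_pow h X m) _

lemma polyIter_sub_X_dvd (f : Polynomial ℤ) {d n : ℕ} (h : d ∣ n) :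
    (polyIter f d - Polynomial.X) ∣ (polyIter f n - Polynomial.X) := by
  obtain ⟨k, rfl⟩ := h
  induction k with
  | zero => simp [polyIter]
  | succ k ih =>
      have h1 : polyIter f (d * (k + 1)) = (polyIter f (d * k)).comp (polyIter f d) := by
        rw [Nat.mul_succ, polyIter_add]
      rw [h1]
      have h2 := comp_sub_dvd (polyIter f (d * k)) (polyIter f d)
      have := dvd_add h2 ih
      have heq : (polyIter f (d * k)).comp (polyIter f d) - polyIter f (d * k)
          + (polyIter f (d * k) - Polynomial.X)
          = (polyIter f (d * k)).comp (polyIter f d) - Polynomial.X := by ring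
      rwa [heq] at this

lemma eval_polyIter {S : Type*} [CommRing S] (φ : ℤ →+* S) (f : Polynomial ℤ) (d : ℕ)
    (x : S) : ((polyIter f d).map φ).eval x = (fun y => (f.map φ).eval y)^[d] x := by
  induction d generalizing x with
  | zero => simp [polyIter]
  | succ d ih =>
      rw [show polyIter f (d + 1) = (polyIter f d).comp f from rfl, Polynomial.map_comp,
        eval_comp, ih, Function.iterate_succ_apply]

lemma rootMultiplicity_prod' {F : Type*} [CommRing F] [IsDomain F] {ι : Type*} (s : Finset ι)
    (g : ι → Polynomial F) (h : ∀ i ∈ s, g i ≠ 0) (α : F) :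
    Polynomial.rootMultiplicity α (∏ i ∈ s, g i) = ∑ i ∈ s, Polynomial.rootMultiplicity α (g i) := by
  classical
  induction s using Finset.induction_on with
  | empty => simp [Polynomial.rootMultiplicity_eq_zero (by simp [Polynomial.IsRoot] : ¬ (1 : Polynomial F).IsRoot α)]
  | @insert a s ha ih =>
      rw [Finset.prod_insert ha, Finset.sum_insert ha,
        Polynomial.rootMultiplicity_mul
          (mul_ne_zero (h a (Finset.mem_insert_self a s))
            (Finset.prod_ne_zero_iff.2 fun i hi => h i (Finset.mem_insert_of_mem hi))),
        ih fun i hi => h i (Finset.mem_insert_of_mem hi)]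

lemma rootMultiplicity_eq_one_of_squarefree {F : Type*} [CommRing F] [IsDomain F]
    {P : Polynomial F} (h : Squarefree P) {α : F} (hr : P.eval α = 0) :
    Polynomial.rootMultiplicity α P = 1 := by
  have h1 : 0 < Polynomial.rootMultiplicity α P :=
    (Polynomial.rootMultiplicity_pos h.ne_zero).2 hr
  have h2 : Polynomial.rootMultiplicity α P < 2 := by
    by_contra hge
    push_neg at hge
    have hdvd : (Polynomial.X - Polynomial.C α) ^ 2 ∣ P :=
      (pow_dvd_pow _ hge).trans (Polynomial.pow_rootMultiplicity_dvd P α)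
    rw [sq] at hdvd
    exact Polynomial.not_isUnit_X_sub_C α (h _ hdvd)
  omega

lemma moebius_trichotomy (x : ℕ) :
    ArithmeticFunction.moebius x = 1 ∨ ArithmeticFunction.moebius x = -1 ∨
      ArithmeticFunction.moebius x = 0 := by
  by_cases h : Squarefree x
  · rw [ArithmeticFunction.moebius_apply_of_squarefree h]
    rcases neg_one_pow_eq_or ℤ (ArithmeticFunction.cardFactors x) with h1 | h1
    · exact Or.inl h1
    · exact Or.inr (Or.inl h1)
  · exact Or.inr (Or.inr (ArithmeticFunction.moebius_eq_zero_of_not_squarefree h))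

lemma sum_moebius_divisors (N : ℕ) :
    ∑ e ∈ N.divisors, ArithmeticFunction.moebius e = if N = 1 then 1 else 0 := by
  rw [← ArithmeticFunction.coe_mul_zeta_apply, ArithmeticFunction.moebius_mul_coe_zeta,
    ArithmeticFunction.one_apply]

lemma sum_moebius_filter_eq_zero {m n : ℕ} (hm : m ∣ n) (hn : 0 < n) (hne : m ≠ n) :
    ∑ d ∈ n.divisors.filter (fun d => m ∣ d), ArithmeticFunction.moebius (n / d) = 0 := by
  have hm0 : 0 < m := Nat.pos_of_dvd_of_pos hm hn
  have hN0 : 0 < n / m := Nat.div_pos (Nat.le_of_dvd hn hm) hm0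
  have hN1 : n / m ≠ 1 := by
    intro h
    apply hne
    have := Nat.mul_div_cancel' hm
    rw [h, mul_one] at this
    omega
  have hbij : ∑ d ∈ n.divisors.filter (fun d => m ∣ d), ArithmeticFunction.moebius (n / d)
      = ∑ e ∈ (n / m).divisors, ArithmeticFunction.moebius ((n / m) / e) := by
    refine Finset.sum_bij' (fun d _ => d / m) (fun e _ => m * e) ?_ ?_ ?_ ?_ ?_
    · intro d hd
      rw [Finset.mem_filter, Nat.mem_divisors] at hd
      obtain ⟨⟨hdn, _⟩, hmd⟩ := hd
      rw [Nat.mem_divisors]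
      obtain ⟨e, rfl⟩ := hmd
      obtain ⟨t, ht⟩ := hdn
      constructor
      · show m * e / m ∣ n / m
        rw [ht, mul_assoc, Nat.mul_div_cancel_left _ hm0, Nat.mul_div_cancel_left _ hm0]
        exact dvd_mul_right e t
      · omega
    · intro e he
      rw [Nat.mem_divisors] at he
      rw [Finset.mem_filter, Nat.mem_divisors]
      exact ⟨⟨(mul_dvd_mul_left m he.1).trans (by rw [Nat.mul_div_cancel' hm]), by omega⟩,
        dvd_mul_right m e⟩
    · intro d hd
      rw [Finset.mem_filter] at hd
      exact Nat.mul_div_cancel' hd.2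
    · intro e _
      exact Nat.mul_div_cancel_left e hm0
    · intro d hd
      rw [Finset.mem_filter] at hd
      obtain ⟨e, rfl⟩ := hd.2
      show ArithmeticFunction.moebius (n / (m * e))
          = ArithmeticFunction.moebius (n / m / (m * e / m))
      rw [Nat.mul_div_cancel_left e hm0, Nat.div_div_eq_div_mul]
  rw [hbij, Nat.sum_div_divisors, sum_moebius_divisors, if_neg hN1]

lemma card_filter_moebius_eq {m n : ℕ} (hm : m ∣ n) (hn : 0 < n) (hne : m ≠ n) :
    (n.divisors.filter (fun d => ArithmeticFunction.moebius (n / d) = 1 ∧ m ∣ d)).card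
      = (n.divisors.filter (fun d => ArithmeticFunction.moebius (n / d) = -1 ∧ m ∣ d)).card := by
  classical
  have key := sum_moebius_filter_eq_zero hm hn hne
  set F := n.divisors.filter (fun d => m ∣ d) with hF
  have hsplit : ∑ d ∈ F, ArithmeticFunction.moebius (n / d)
      = ∑ d ∈ F.filter (fun d => ArithmeticFunction.moebius (n / d) = 1),
          ArithmeticFunction.moebius (n / d)
        + ∑ d ∈ F.filter (fun d => ¬ ArithmeticFunction.moebius (n / d) = 1),
          ArithmeticFunction.moebius (n / d) :=
    (Finset.sum_filter_add_sum_filter_not F _ _).symm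
  have hsplit2 : ∑ d ∈ F.filter (fun d => ¬ ArithmeticFunction.moebius (n / d) = 1),
          ArithmeticFunction.moebius (n / d)
      = ∑ d ∈ (F.filter (fun d => ¬ ArithmeticFunction.moebius (n / d) = 1)).filter
            (fun d => ArithmeticFunction.moebius (n / d) = -1),
          ArithmeticFunction.moebius (n / d)
        + ∑ d ∈ (F.filter (fun d => ¬ ArithmeticFunction.moebius (n / d) = 1)).filter
            (fun d => ¬ ArithmeticFunction.moebius (n / d) = -1),
          ArithmeticFunction.moebius (n / d) :=
    (Finset.sum_filter_add_sum_filter_not _ _ _).symm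
  have hzero : ∑ d ∈ (F.filter (fun d => ¬ ArithmeticFunction.moebius (n / d) = 1)).filter
      (fun d => ¬ ArithmeticFunction.moebius (n / d) = -1),
      ArithmeticFunction.moebius (n / d) = 0 := by
    apply Finset.sum_eq_zero
    intro d hd
    rw [Finset.mem_filter] at hd
    obtain ⟨hd1, hd2⟩ := hd
    rw [Finset.mem_filter] at hd1
    rcases moebius_trichotomy (n / d) with h | h | h
    · exact absurd h hd1.2
    · exact absurd h hd2
    · exact h
  have hone : ∑ d ∈ F.filter (fun d => ArithmeticFunction.moebius (n / d) = 1),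
      ArithmeticFunction.moebius (n / d)
      = ((F.filter (fun d => ArithmeticFunction.moebius (n / d) = 1)).card : ℤ) := by
    rw [Finset.sum_congr rfl (fun d hd => (Finset.mem_filter.1 hd).2)]
    simp
  have hmone : ∑ d ∈ (F.filter (fun d => ¬ ArithmeticFunction.moebius (n / d) = 1)).filter
      (fun d => ArithmeticFunction.moebius (n / d) = -1),
      ArithmeticFunction.moebius (n / d)
      = -(((F.filter (fun d => ¬ ArithmeticFunction.moebius (n / d) = 1)).filter
          (fun d => ArithmeticFunction.moebius (n / d) = -1)).card : ℤ) := by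
    rw [Finset.sum_congr rfl (fun d hd => (Finset.mem_filter.1 hd).2)]
    simp
  have hcards : ((F.filter (fun d => ArithmeticFunction.moebius (n / d) = 1)).card : ℤ)
      = (((F.filter (fun d => ¬ ArithmeticFunction.moebius (n / d) = 1)).filter
          (fun d => ArithmeticFunction.moebius (n / d) = -1)).card : ℤ) := by
    rw [hsplit, hsplit2, hzero, hone, hmone] at key
    omega
  have hF1 : F.filter (fun d => ArithmeticFunction.moebius (n / d) = 1)
      = n.divisors.filter (fun d => ArithmeticFunction.moebius (n / d) = 1 ∧ m ∣ d) := by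
    rw [hF, Finset.filter_filter]
    apply Finset.filter_congr
    intro d _
    tauto
  have hF2 : (F.filter (fun d => ¬ ArithmeticFunction.moebius (n / d) = 1)).filter
      (fun d => ArithmeticFunction.moebius (n / d) = -1)
      = n.divisors.filter (fun d => ArithmeticFunction.moebius (n / d) = -1 ∧ m ∣ d) := by
    rw [hF, Finset.filter_filter, Finset.filter_filter]
    apply Finset.filter_congr
    intro d _
    have hx : ArithmeticFunction.moebius (n / d) = -1 →
        ¬ ArithmeticFunction.moebius (n / d) = 1 := by
      intro h h'
      rw [h] at h'
      exact absurd h' (by decide)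
    tauto
  rw [← hF1, ← hF2]
  exact_mod_cast hcards

lemma exists_bezout_int (D : Polynomial ℤ)
    (h : Squarefree (D.map (Int.castRingHom ℚ))) :
    ∃ (a b : Polynomial ℤ) (k : ℤ), k ≠ 0 ∧
      a * D + b * D.derivative = Polynomial.C k := by
  have hsep : (D.map (Int.castRingHom ℚ)).Separable :=
    (PerfectField.separable_iff_squarefree).2 h
  obtain ⟨u, v, huv⟩ := hsep
  obtain ⟨bu, hu⟩ :=
    IsLocalization.integerNormalization_map_to_map (nonZeroDivisors ℤ) u
  obtain ⟨bv, hv⟩ :=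
    IsLocalization.integerNormalization_map_to_map (nonZeroDivisors ℤ) v
  have hzu : (bu : ℤ) ≠ 0 := mem_nonZeroDivisors_iff_ne_zero.1 bu.2
  have hzv : (bv : ℤ) ≠ 0 := mem_nonZeroDivisors_iff_ne_zero.1 bv.2
  set u₀ := IsLocalization.integerNormalization (nonZeroDivisors ℤ) u with hu₀
  set v₀ := IsLocalization.integerNormalization (nonZeroDivisors ℤ) v with hv₀
  have halg : algebraMap ℤ ℚ = Int.castRingHom ℚ := by ext z; simp
  rw [halg] at hu hv
  refine ⟨Polynomial.C ((bv : ℤ)) * u₀, Polynomial.C ((bu : ℤ)) * v₀, (bu : ℤ) * (bv : ℤ),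
    mul_ne_zero hzu hzv, ?_⟩
  apply Polynomial.map_injective (Int.castRingHom ℚ) Int.cast_injective
  have hsm : ∀ (z : ℤ) (q : Polynomial ℚ), z • q = Polynomial.C ((z : ℚ)) * q := by
    intro z q
    rw [zsmul_eq_mul, ← Polynomial.C_eq_intCast]
  rw [Polynomial.map_add, Polynomial.map_mul, Polynomial.map_mul, Polynomial.map_mul,
    Polynomial.map_mul, Polynomial.map_C, Polynomial.map_C, Polynomial.map_C,
    hu, hv, hsm, hsm, ← Polynomial.derivative_map]
  have hcast : ∀ z : ℤ, (Int.castRingHom ℚ) z = (z : ℚ) := fun z => rfl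
  rw [hcast, hcast, hcast]
  push_cast
  rw [Polynomial.C_mul]
  linear_combination Polynomial.C ((bu : ℤ) : ℚ) * Polynomial.C ((bv : ℤ) : ℚ) * huv

lemma map_zmod_ne_zero (p : ℕ) [Fact p.Prime] (Q : Polynomial ℤ) (hQ : Q ≠ 0)
    (h : ¬ (p : ℤ) ∣ Q.leadingCoeff) : Q.map (Int.castRingHom (ZMod p)) ≠ 0 := by
  intro h0
  apply h
  have : (Q.map (Int.castRingHom (ZMod p))).coeff Q.natDegree = 0 := by rw [h0]; simp
  rw [Polynomial.coeff_map] at this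
  rw [← ZMod.intCast_zmod_eq_zero_iff_dvd]
  exact this

theorem stmt8 (f : Polynomial ℤ) (n : ℕ) (hn : 1 ≤ n)
    -- `f^n(x) - x` has no repeated roots in an algebraic closure of `ℚ`:
    (hsep : Squarefree ((polyIter f n - Polynomial.X).map (Int.castRingHom ℚ)))
    (Φ : Polynomial ℤ)
    -- `Φ` is the `n`-th dynatomic polynomial of `f`:
    (hΦ : Φ * ∏ d ∈ n.divisors.filter (fun d => ArithmeticFunction.moebius (n / d) = -1),
            (polyIter f d - Polynomial.X)
        = ∏ d ∈ n.divisors.filter (fun d => ArithmeticFunction.moebius (n / d) = 1),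
            (polyIter f d - Polynomial.X))
    (j : ℕ) :
    {p : ℕ | p.Prime ∧
      ¬ (Nat.card {x : ZMod p //
            Function.minimalPeriod (fun y : ZMod p =>
              (f.map (Int.castRingHom (ZMod p))).eval y) x = n} = j * n
        ↔ Nat.card {x : ZMod p // (Φ.map (Int.castRingHom (ZMod p))).eval x = 0} = j * n)}.Finite := by
  classical
  set D : Polynomial ℤ := polyIter f n - Polynomial.X with hD
  have hDq0 : D.map (Int.castRingHom ℚ) ≠ 0 := hsep.ne_zero
  have hD0 : D ≠ 0 := fun h => hDq0 (by rw [h, Polynomial.map_zero])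
  have hPdvd : ∀ d ∈ n.divisors, (polyIter f d - Polynomial.X) ∣ D := fun d hd =>
    polyIter_sub_X_dvd f (Nat.mem_divisors.1 hd).1
  have hPd0 : ∀ d ∈ n.divisors, (polyIter f d - Polynomial.X) ≠ 0 := by
    intro d hd h0
    exact hD0 (zero_dvd_iff.1 (h0 ▸ hPdvd d hd))
  obtain ⟨a, b, k, hk0, hbez⟩ := exists_bezout_int D hsep
  have hM0 : (∏ d ∈ n.divisors.filter (fun d => ArithmeticFunction.moebius (n / d) = 1),
      (polyIter f d - Polynomial.X)) ≠ 0 :=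
    Finset.prod_ne_zero_iff.2 fun d hd => hPd0 d (Finset.mem_of_mem_filter d hd)
  have hΦ0 : Φ ≠ 0 := by
    intro h
    rw [h, zero_mul] at hΦ
    exact hM0 hΦ.symm
  set c : ℤ := k * Φ.leadingCoeff
      * ∏ d ∈ n.divisors, (polyIter f d - Polynomial.X).leadingCoeff with hc
  have hc0 : c ≠ 0 :=
    mul_ne_zero (mul_ne_zero hk0 (Polynomial.leadingCoeff_ne_zero.2 hΦ0))
      (Finset.prod_ne_zero_iff.2 fun d hd => Polynomial.leadingCoeff_ne_zero.2 (hPd0 d hd))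
  apply Set.Finite.subset (c.natAbs.divisors : Finset ℕ).finite_toSet
  intro p hp
  simp only [Set.mem_setOf_eq] at hp
  obtain ⟨hp, hiff⟩ := hp
  rw [Finset.mem_coe, Nat.mem_divisors]
  refine ⟨?_, Int.natAbs_ne_zero.2 hc0⟩
  by_contra hpc'
  have hpc : ¬ (p : ℤ) ∣ c := by
    intro h
    apply hpc'
    have := Int.natAbs_dvd_natAbs.2 h
    simpa using this
  apply hiff
  haveI : Fact p.Prime := ⟨hp⟩
  set φ := Int.castRingHom (ZMod p) with hφ
  have hpk : ¬ (p : ℤ) ∣ k := fun h => hpc ((h.mul_right _).mul_right _)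
  have hpΦlc : ¬ (p : ℤ) ∣ Φ.leadingCoeff := fun h => hpc ((h.mul_left k).mul_right _)
  have hpPlc : ∀ d ∈ n.divisors, ¬ (p : ℤ) ∣ (polyIter f d - Polynomial.X).leadingCoeff := by
    intro d hd h
    exact hpc (Dvd.dvd.mul_left
      (h.trans (Finset.dvd_prod_of_mem
        (fun d => (polyIter f d - Polynomial.X).leadingCoeff) hd)) _)
  have hΦbar0 : Φ.map φ ≠ 0 := map_zmod_ne_zero p Φ hΦ0 hpΦlc
  have hPbar0 : ∀ d ∈ n.divisors, (polyIter f d - Polynomial.X).map φ ≠ 0 := fun d hd =>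
    map_zmod_ne_zero p _ (hPd0 d hd) (hpPlc d hd)
  have hnmem : n ∈ n.divisors := Nat.mem_divisors_self n (by omega)
  have hDbar0 : D.map φ ≠ 0 := hPbar0 n hnmem
  -- squarefreeness of D mod p
  have hsq : Squarefree (D.map φ) := by
    have heq : (a.map φ) * (D.map φ) + (b.map φ) * ((D.map φ).derivative)
        = Polynomial.C ((k : ZMod p)) := by
      rw [Polynomial.derivative_map, ← Polynomial.map_mul, ← Polynomial.map_mul,
        ← Polynomial.map_add, hbez, Polynomial.map_C]
      rfl
    have hkp : ((k : ZMod p)) ≠ 0 := fun h =>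
      hpk ((ZMod.intCast_zmod_eq_zero_iff_dvd k p).1 h)
    have hcop : IsCoprime (D.map φ) ((D.map φ).derivative) :=
      ⟨Polynomial.C ((k : ZMod p))⁻¹ * (a.map φ), Polynomial.C ((k : ZMod p))⁻¹ * (b.map φ), by
        rw [mul_assoc, mul_assoc, ← mul_add, heq, ← Polynomial.C_mul,
          inv_mul_cancel₀ hkp, Polynomial.C_1]⟩
    exact Polynomial.Separable.squarefree hcop
  have hPbarsq : ∀ d ∈ n.divisors, Squarefree ((polyIter f d - Polynomial.X).map φ) := by
    intro d hd
    apply Squarefree.squarefree_of_dvd _ hsq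
    obtain ⟨q, hq⟩ := hPdvd d hd
    exact ⟨q.map φ, by rw [hq, Polynomial.map_mul]⟩
  set g : ZMod p → ZMod p := fun y => (f.map φ).eval y with hg
  have hrootiff : ∀ (α : ZMod p) (d : ℕ),
      (((polyIter f d - Polynomial.X).map φ).eval α = 0
        ↔ Function.minimalPeriod g α ∣ d) := by
    intro α d
    have heval : ((polyIter f d - Polynomial.X).map φ).eval α = g^[d] α - α := by
      rw [Polynomial.map_sub, Polynomial.eval_sub, Polynomial.map_X, Polynomial.eval_X,
        eval_polyIter]
    rw [heval, sub_eq_zero]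
    constructor
    · intro h
      exact Function.IsPeriodicPt.minimalPeriod_dvd h
    · intro h
      exact Function.isPeriodicPt_iff_minimalPeriod_dvd.2 h
  -- product relation mod p
  have hΦbar : (Φ.map φ)
      * ∏ d ∈ n.divisors.filter (fun d => ArithmeticFunction.moebius (n / d) = -1),
          ((polyIter f d - Polynomial.X).map φ)
      = ∏ d ∈ n.divisors.filter (fun d => ArithmeticFunction.moebius (n / d) = 1),
          ((polyIter f d - Polynomial.X).map φ) := by
    have := congrArg (Polynomial.map φ) hΦ
    simpa [Polynomial.map_mul, Polynomial.map_prod] using this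
  have hμn : ArithmeticFunction.moebius (n / n) = 1 := by
    rw [Nat.div_self (by omega : 0 < n)]
    exact ArithmeticFunction.moebius_apply_one
  have hnmem1 : n ∈ n.divisors.filter (fun d => ArithmeticFunction.moebius (n / d) = 1) :=
    Finset.mem_filter.2 ⟨hnmem, hμn⟩
  -- the key pointwise equivalence
  have key : ∀ α : ZMod p, ((Φ.map φ).eval α = 0 ↔ Function.minimalPeriod g α = n) := by
    intro α
    constructor
    · intro hΦα
      have hMα : (∏ d ∈ n.divisors.filter (fun d => ArithmeticFunction.moebius (n / d) = 1),
          ((polyIter f d - Polynomial.X).map φ)).eval α = 0 := by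
        rw [← hΦbar, Polynomial.eval_mul, hΦα, zero_mul]
      rw [Polynomial.eval_prod, Finset.prod_eq_zero_iff] at hMα
      obtain ⟨d, hd1, hd2⟩ := hMα
      have hdn : d ∈ n.divisors := Finset.mem_of_mem_filter d hd1
      have hdpos : 0 < d := Nat.pos_of_mem_divisors hdn
      set m := Function.minimalPeriod g α with hm
      have hmd : m ∣ d := (hrootiff α d).1 hd2
      have hmn : m ∣ n := hmd.trans (Nat.mem_divisors.1 hdn).1
      by_contra hne
      -- root multiplicity counting
      have hrm : ∀ e ∈ n.divisors,
          Polynomial.rootMultiplicity α ((polyIter f e - Polynomial.X).map φ)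
            = if m ∣ e then 1 else 0 := by
        intro e he
        by_cases hme : m ∣ e
        · rw [if_pos hme]
          exact rootMultiplicity_eq_one_of_squarefree (hPbarsq e he) ((hrootiff α e).2 hme)
        · rw [if_neg hme]
          exact Polynomial.rootMultiplicity_eq_zero (fun hr => hme ((hrootiff α e).1 hr))
      have hrmprod : ∀ (t : ℤ),
          (∀ s : Finset ℕ, s ⊆ n.divisors →
          Polynomial.rootMultiplicity α
            (∏ d ∈ s, ((polyIter f d - Polynomial.X).map φ))
            = (s.filter (fun d => m ∣ d)).card) := by
        intro _ s hs
        rw [rootMultiplicity_prod' s _ (fun i hi => hPbar0 i (hs hi)) α,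
          Finset.sum_congr rfl (fun e he => hrm e (hs he)), ← Finset.sum_filter]
        simp
      have hsub1 : n.divisors.filter (fun d => ArithmeticFunction.moebius (n / d) = 1)
          ⊆ n.divisors := Finset.filter_subset _ _
      have hsub2 : n.divisors.filter (fun d => ArithmeticFunction.moebius (n / d) = -1)
          ⊆ n.divisors := Finset.filter_subset _ _
      have hrmM := hrmprod 0 _ hsub1
      have hrmN := hrmprod 0 _ hsub2
      have hMbar0 : (∏ d ∈ n.divisors.filter
          (fun d => ArithmeticFunction.moebius (n / d) = 1),
          ((polyIter f d - Polynomial.X).map φ)) ≠ 0 :=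
        Finset.prod_ne_zero_iff.2 fun i hi => hPbar0 i (hsub1 hi)
      have hmulne : (Φ.map φ) * ∏ d ∈ n.divisors.filter
          (fun d => ArithmeticFunction.moebius (n / d) = -1),
          ((polyIter f d - Polynomial.X).map φ) ≠ 0 := by
        rw [hΦbar]; exact hMbar0
      have hrmsplit := Polynomial.rootMultiplicity_mul (x := α) hmulne
      have hΦpos : 0 < Polynomial.rootMultiplicity α (Φ.map φ) :=
        (Polynomial.rootMultiplicity_pos hΦbar0).2 hΦα
      have hcards := card_filter_moebius_eq hmn (by omega) hne
      simp only [Finset.filter_filter] at hrmM hrmN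
      rw [hΦbar, hrmM, hrmN] at hrmsplit
      rw [hrmsplit] at hcards
      omega
    · intro hmn
      have hnα : ((polyIter f n - Polynomial.X).map φ).eval α = 0 :=
        (hrootiff α n).2 (hmn ▸ dvd_refl n)
      have hNα : (∏ d ∈ n.divisors.filter
          (fun d => ArithmeticFunction.moebius (n / d) = -1),
          ((polyIter f d - Polynomial.X).map φ)).eval α ≠ 0 := by
        rw [Polynomial.eval_prod]
        apply Finset.prod_ne_zero_iff.2
        intro d hd h0
        have hdn := Finset.mem_of_mem_filter d hd
        have hμ := (Finset.mem_filter.1 hd).2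
        have hnd : n ∣ d := hmn ▸ (hrootiff α d).1 h0
        have hdn' : d = n := Nat.dvd_antisymm (Nat.mem_divisors.1 hdn).1 hnd
        rw [hdn', hμn] at hμ
        exact absurd hμ (by decide)
      have hMα : (∏ d ∈ n.divisors.filter
          (fun d => ArithmeticFunction.moebius (n / d) = 1),
          ((polyIter f d - Polynomial.X).map φ)).eval α = 0 := by
        rw [Polynomial.eval_prod]
        exact Finset.prod_eq_zero hnmem1 hnα
      have := congrArg (Polynomial.eval α) hΦbar
      rw [Polynomial.eval_mul, hMα, Polynomial.eval_prod] at this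
      rw [Polynomial.eval_prod] at hNα
      rcases mul_eq_zero.1 this with h | h
      · exact h
      · exact absurd h hNα
  have hcard : Nat.card {x : ZMod p // Function.minimalPeriod g x = n}
      = Nat.card {x : ZMod p // (Φ.map φ).eval x = 0} :=
    Nat.card_congr (Equiv.subtypeEquivRight (fun x => (key x).symm))
  rw [hcard]
end

section
/- For each j ≥ 0 let (t_{j,n})_{n≥1} be a sequence of nonnegative real numbers, and define sequences (s_{j,n})_{n≥1} recursively by s_{j,1} = t_{j,1} and, for n ≥ 2, s_{j,n} = Σ_{i=0}^{j} s_{i,n−1}·t_{j−i,n}. Suppose that for every j ≥ 0 there exists R_j > 0 such that for all n ≥ 1, |t_{j,n} − (1/(j!·n^j))·(1 − 1/n)| ≤ R_j/n^{j+2}. Then for every j ≥ 0 there exists C_j > 0 such that for all n ≥ 1, s_{j,n} ≤ C_j · n^{−1/(j+1)}. -/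
/-!
Induct on `j`. Since `t 0 n = 1 - 1/n + O(1/n²)`, `t k n = O(1/n)` for `k ≥ 1`, and the lower
rows decay at least like `n^(-α)` with `α = 1/(j+1)`, row `j` satisfies
`s j (n+1) ≤ s j n * (1 - 1/(n+1) + r/(n+1)²) + B * n^(-α)/(n+1)`.
For `C` large, `C * exp(-2r/n) * n^(-α)` is a supersolution of this recursion: by Bernoulli,
`n^(-α) * (1 - 1/(n+1)) ≤ (n+1)^(-α) * (1 - (1-α)/(n+1))`, and the margin `(1-α)/(n+1)` pays for
the inhomogeneous term, while the exponential factor absorbs the `r/(n+1)²` error.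
-/

open Real

lemma rpow_neg_mul_one_sub_inv_le {x α : ℝ} (hx : 0 < x) (hα0 : 0 ≤ α) (hα1 : α ≤ 1) :
    x ^ (-α) * (1 - 1 / (x + 1)) ≤ (x + 1) ^ (-α) * (1 - (1 - α) / (x + 1)) := by
  have hy : 0 < x + 1 := by linarith
  have hratio : 1 - 1 / (x + 1) = x / (x + 1) := by field_simp; ring
  have hsplit : x ^ (-α) * (x / (x + 1)) = (x + 1) ^ (-α) * (x / (x + 1)) ^ (1 - α) := by
    rw [div_rpow hx.le hy.le, sub_eq_neg_add, rpow_add_one hx.ne', rpow_add_one hy.ne']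
    field_simp
  have hbernoulli : (x / (x + 1)) ^ (1 - α) ≤ 1 - (1 - α) / (x + 1) := by
    have h := rpow_one_add_le_one_add_mul_self (s := -(1 / (x + 1))) (p := 1 - α)
      (by rw [neg_le_neg_iff, div_le_one hy]; linarith) (by linarith) (by linarith)
    rw [← sub_eq_add_neg, hratio] at h
    calc _ ≤ _ := h
      _ = _ := by ring
  rw [hratio, hsplit]
  gcongr

lemma rpow_neg_le_two_mul_rpow_neg_add_one {x α : ℝ} (hx : 1 ≤ x) (hα0 : 0 ≤ α) (hα1 : α ≤ 1) :
    x ^ (-α) ≤ 2 * (x + 1) ^ (-α) := by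
  have hy : 0 < x + 1 := by linarith
  calc x ^ (-α) ≤ ((x + 1) / 2) ^ (-α) :=
        rpow_le_rpow_of_nonpos (by positivity) (by linarith) (by linarith)
    _ = 2 ^ α * (x + 1) ^ (-α) := by
        rw [div_rpow hy.le zero_le_two, rpow_neg zero_le_two, div_inv_eq_mul, mul_comm]
    _ ≤ 2 ^ (1 : ℝ) * (x + 1) ^ (-α) := by gcongr; norm_num
    _ = 2 * (x + 1) ^ (-α) := by rw [rpow_one]

lemma exp_neg_div_mul_one_add_le {x c : ℝ} (hx : 0 < x) (hc : 0 ≤ c) :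
    exp (-(c / x)) * (1 + c / (x + 1) ^ 2) ≤ exp (-(c / (x + 1))) := by
  have hgap : c / (x + 1) ^ 2 ≤ c / x - c / (x + 1) := by
    rw [div_sub_div _ _ hx.ne' (by positivity), show c * (x + 1) - x * c = c by ring]
    gcongr
    nlinarith
  calc exp (-(c / x)) * (1 + c / (x + 1) ^ 2)
      ≤ exp (-(c / x)) * exp (c / x - c / (x + 1)) := by
        gcongr
        linarith [add_one_le_exp (c / x - c / (x + 1))]
    _ = exp (-(c / (x + 1))) := by rw [← exp_add]; ring_nf

lemma envelope_succ_le {x α r B C : ℝ} (hx : 1 ≤ x) (hα0 : 0 ≤ α) (hα1 : α ≤ 1) (hr : 0 ≤ r)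
    (hB : 0 ≤ B) (hC : 0 ≤ C) (hCB : 2 * B ≤ C * exp (-(2 * r)) * (1 - α)) :
    C * exp (-(2 * r / x)) * x ^ (-α) * (1 - 1 / (x + 1) + r / (x + 1) ^ 2)
        + B * (x ^ (-α) / (x + 1))
      ≤ C * exp (-(2 * r / (x + 1))) * (x + 1) ^ (-α) := by
  have hx0 : 0 < x := by linarith
  set e := exp (-(2 * r / x))
  set w := (x + 1) ^ (-α)
  have hw : 0 ≤ w := by positivity
  have hCBe : 2 * B ≤ C * e * (1 - α) := by
    refine hCB.trans (mul_le_mul_of_nonneg_right ?_ (by linarith))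
    exact mul_le_mul_of_nonneg_left (exp_le_exp.2 (neg_le_neg (div_le_self (by linarith) hx))) hC
  have hslack : 0 ≤ (C * e * (1 - α) - 2 * B) / (x + 1) := by
    apply div_nonneg <;> linarith
  calc C * e * x ^ (-α) * (1 - 1 / (x + 1) + r / (x + 1) ^ 2) + B * (x ^ (-α) / (x + 1))
      = C * e * (x ^ (-α) * (1 - 1 / (x + 1))) + (C * e * r / (x + 1) ^ 2 + B / (x + 1))
          * x ^ (-α) := by ring
    _ ≤ C * e * (w * (1 - (1 - α) / (x + 1))) + (C * e * r / (x + 1) ^ 2 + B / (x + 1))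
          * (2 * w) := by
        gcongr _ * ?_ + _ * ?_
        · exact rpow_neg_mul_one_sub_inv_le hx0 hα0 hα1
        · exact rpow_neg_le_two_mul_rpow_neg_add_one hx hα0 hα1
    _ = w * (C * (e * (1 + 2 * r / (x + 1) ^ 2)) - (C * e * (1 - α) - 2 * B) / (x + 1)) := by
        ring
    _ ≤ w * (C * exp (-(2 * r / (x + 1)))) := by
        gcongr
        refine (sub_le_self _ hslack).trans ?_
        gcongr
        exact exp_neg_div_mul_one_add_le hx0 (by linarith)
    _ = C * exp (-(2 * r / (x + 1))) * w := mul_comm _ _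

theorem exists_le_mul_rpow_neg_of_le_succ {u : ℕ → ℝ} {α r B : ℝ} (hα0 : 0 ≤ α) (hα1 : α ≤ 1)
    (hr : 0 ≤ r) (hB : 0 ≤ B) (hαB : α < 1 ∨ B = 0)
    (hu : ∀ n : ℕ, 1 ≤ n → u (n + 1) ≤
      u n * (1 - 1 / ((n : ℝ) + 1) + r / ((n : ℝ) + 1) ^ 2)
        + B * ((n : ℝ) ^ (-α) / ((n : ℝ) + 1))) :
    ∃ C, 0 < C ∧ ∀ n : ℕ, 1 ≤ n → u n ≤ C * (n : ℝ) ^ (-α) := by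
  set C := (|u 1| + 2 * B / (1 - α) + 1) * exp (2 * r)
  have hC : 0 < C := by
    have : 0 ≤ 2 * B / (1 - α) := div_nonneg (by linarith) (by linarith)
    positivity
  have hCe : C * exp (-(2 * r)) = |u 1| + 2 * B / (1 - α) + 1 := by
    rw [mul_assoc, ← exp_add, add_neg_cancel, exp_zero, mul_one]
  have hCB : 2 * B ≤ C * exp (-(2 * r)) * (1 - α) := by
    rw [hCe]
    rcases hαB with hα | rfl
    · have h1α : 0 < 1 - α := by linarith
      rw [add_mul, add_mul, div_mul_cancel₀ _ h1α.ne']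
      nlinarith [abs_nonneg (u 1)]
    · simp only [mul_zero, zero_div, add_zero]
      exact mul_nonneg (by positivity) (by linarith)
  have henvelope : ∀ n : ℕ, 1 ≤ n → u n ≤ C * exp (-(2 * r / n)) * (n : ℝ) ^ (-α) := by
    intro n hn
    induction n, hn using Nat.le_induction with
    | base =>
      simp only [Nat.cast_one, div_one, one_rpow, mul_one, hCe]
      linarith [le_abs_self (u 1), div_nonneg (mul_nonneg zero_le_two hB) (sub_nonneg.2 hα1)]
    | succ n hn ih =>
      have hx : (1 : ℝ) ≤ n := by exact_mod_cast hn
      have hfactor : 0 ≤ 1 - 1 / ((n : ℝ) + 1) + r / ((n : ℝ) + 1) ^ 2 := by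
        have : 1 / ((n : ℝ) + 1) ≤ 1 := by rw [div_le_one (by linarith)]; linarith
        have : 0 ≤ r / ((n : ℝ) + 1) ^ 2 := by positivity
        linarith
      push_cast
      calc u (n + 1)
          ≤ u n * (1 - 1 / ((n : ℝ) + 1) + r / ((n : ℝ) + 1) ^ 2)
              + B * ((n : ℝ) ^ (-α) / ((n : ℝ) + 1)) := hu n hn
        _ ≤ C * exp (-(2 * r / n)) * (n : ℝ) ^ (-α)
                * (1 - 1 / ((n : ℝ) + 1) + r / ((n : ℝ) + 1) ^ 2)
              + B * ((n : ℝ) ^ (-α) / ((n : ℝ) + 1)) := by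
          gcongr
        _ ≤ C * exp (-(2 * r / ((n : ℝ) + 1))) * ((n : ℝ) + 1) ^ (-α) :=
          envelope_succ_le hx hα0 hα1 hr hB hC.le hCB
  refine ⟨C, hC, fun n hn => (henvelope n hn).trans ?_⟩
  have hexp : exp (-(2 * r / n)) ≤ 1 := by
    rw [exp_le_one_iff, neg_nonpos]
    positivity
  calc C * exp (-(2 * r / n)) * (n : ℝ) ^ (-α) ≤ C * 1 * (n : ℝ) ^ (-α) := by gcongr
    _ = C * (n : ℝ) ^ (-α) := by rw [mul_one]

lemma inv_factorial_mul_pow_mul_one_sub_add_le {k n : ℕ} {R : ℝ} (hk : 1 ≤ k) (hn : 1 ≤ n)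
    (hR : 0 ≤ R) :
    1 / ((k.factorial : ℝ) * (n : ℝ) ^ k) * (1 - 1 / (n : ℝ)) + R / (n : ℝ) ^ (k + 2)
      ≤ (1 + R) / n := by
  have hn1 : (1 : ℝ) ≤ n := by exact_mod_cast hn
  have hmain : 1 / ((k.factorial : ℝ) * (n : ℝ) ^ k) * (1 - 1 / (n : ℝ)) ≤ 1 / n := by
    have hden : (n : ℝ) ≤ (k.factorial : ℝ) * (n : ℝ) ^ k := by
      calc (n : ℝ) = 1 * (n : ℝ) ^ 1 := by ring
        _ ≤ (k.factorial : ℝ) * (n : ℝ) ^ k := by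
          gcongr
          exact_mod_cast k.factorial_pos
    calc 1 / ((k.factorial : ℝ) * (n : ℝ) ^ k) * (1 - 1 / (n : ℝ))
        ≤ 1 / ((k.factorial : ℝ) * (n : ℝ) ^ k) * 1 := by
          gcongr
          exact sub_le_self _ (by positivity)
      _ ≤ 1 / n := by rw [mul_one]; gcongr
  have herr : R / (n : ℝ) ^ (k + 2) ≤ R / n := by
    gcongr
    calc (n : ℝ) = (n : ℝ) ^ 1 := (pow_one _).symm
      _ ≤ (n : ℝ) ^ (k + 2) := pow_le_pow_right₀ hn1 (by omega)
  rw [add_div]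
  exact add_le_add hmain herr

section Recurrence

variable {t s : ℕ → ℕ → ℝ}

lemma nonneg_of_recurrence (ht_nonneg : ∀ j n, 1 ≤ n → 0 ≤ t j n) (hs1 : ∀ j, s j 1 = t j 1)
    (hsrec : ∀ j, ∀ n : ℕ, 2 ≤ n →
      s j n = ∑ i ∈ Finset.range (j + 1), s i (n - 1) * t (j - i) n) :
    ∀ n : ℕ, 1 ≤ n → ∀ j, 0 ≤ s j n := by
  intro n hn
  induction n, hn using Nat.le_induction with
  | base => exact fun j => (hs1 j).symm ▸ ht_nonneg j 1 le_rfl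
  | succ n hn ih =>
    intro j
    rw [hsrec j (n + 1) (by omega), Nat.add_sub_cancel]
    exact Finset.sum_nonneg fun i _ => mul_nonneg (ih i) (ht_nonneg _ _ (by omega))

lemma exists_bound_of_lower_rows (hsrec : ∀ j, ∀ n : ℕ, 2 ≤ n →
      s j n = ∑ i ∈ Finset.range (j + 1), s i (n - 1) * t (j - i) n)
    (hs_nonneg : ∀ n : ℕ, 1 ≤ n → ∀ j, 0 ≤ s j n)
    {r : ℝ} (hr : 0 ≤ r) (ht0 : ∀ n : ℕ, 1 ≤ n → t 0 n ≤ 1 - 1 / (n : ℝ) + r / (n : ℝ) ^ 2)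
    {K : ℕ → ℝ} (hK : ∀ k, 0 ≤ K k) (htK : ∀ k n : ℕ, 1 ≤ k → 1 ≤ n → t k n ≤ K k / n)
    (j : ℕ) (ih : ∀ i < j, ∃ C : ℝ, 0 < C ∧ ∀ n : ℕ, 1 ≤ n →
      s i n ≤ C * (n : ℝ) ^ (-(1 : ℝ) / ((i : ℝ) + 1))) :
    ∃ C : ℝ, 0 < C ∧ ∀ n : ℕ, 1 ≤ n → s j n ≤ C * (n : ℝ) ^ (-(1 : ℝ) / ((j : ℝ) + 1)) := by
  set α : ℝ := 1 / ((j : ℝ) + 1) with hα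
  have hα0 : 0 ≤ α := by positivity
  have hα1 : α ≤ 1 := by rw [hα, div_le_one (by positivity)]; linarith [j.cast_nonneg (α := ℝ)]
  have hlower : ∀ i ∈ Finset.range j, ∃ C : ℝ, 0 < C ∧ ∀ n : ℕ, 1 ≤ n →
      s i n ≤ C * (n : ℝ) ^ (-α) := by
    intro i hi
    obtain ⟨C, hC, hbound⟩ := ih i (Finset.mem_range.1 hi)
    refine ⟨C, hC, fun n hn => (hbound n hn).trans ?_⟩
    have hij : (i : ℝ) ≤ j := by exact_mod_cast (Finset.mem_range.1 hi).le
    refine mul_le_mul_of_nonneg_left (rpow_le_rpow_of_exponent_le (by exact_mod_cast hn) ?_) hC.le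
    rw [neg_div, neg_le_neg_iff, hα]
    gcongr
  choose! C hC hCbound using hlower
  set B := ∑ i ∈ Finset.range j, C i * K (j - i)
  have hB : 0 ≤ B := Finset.sum_nonneg fun i hi => mul_nonneg (hC i hi).le (hK _)
  have hαB : α < 1 ∨ B = 0 := by
    rcases j.eq_zero_or_pos with rfl | hj
    · exact Or.inr (Finset.sum_range_zero _)
    · left
      rw [hα, div_lt_one (by positivity)]
      exact_mod_cast Nat.lt_add_of_pos_left hj
  rw [neg_div, ← hα]
  refine exists_le_mul_rpow_neg_of_le_succ hα0 hα1 hr hB hαB fun n hn => ?_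
  have hcast : ((n + 1 : ℕ) : ℝ) = (n : ℝ) + 1 := Nat.cast_succ n
  have hsum : ∑ i ∈ Finset.range j, s i n * t (j - i) (n + 1)
      ≤ B * ((n : ℝ) ^ (-α) / ((n : ℝ) + 1)) := by
    rw [Finset.sum_mul]
    refine Finset.sum_le_sum fun i hi => ?_
    have hij := Finset.mem_range.1 hi
    calc s i n * t (j - i) (n + 1) ≤ (C i * (n : ℝ) ^ (-α)) * (K (j - i) / ((n : ℝ) + 1)) := by
          refine mul_le_mul_of_nonneg (hCbound i hi n hn) ?_ (hs_nonneg n hn i)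
            (div_nonneg (hK _) (by positivity))
          rw [← hcast]
          exact htK _ _ (by omega) (by omega)
      _ = C i * K (j - i) * ((n : ℝ) ^ (-α) / ((n : ℝ) + 1)) := by ring
  have hdiag : s j n * t 0 (n + 1) ≤ s j n * (1 - 1 / ((n : ℝ) + 1) + r / ((n : ℝ) + 1) ^ 2) := by
    rw [← hcast]
    exact mul_le_mul_of_nonneg_left (ht0 _ (by omega)) (hs_nonneg n hn j)
  rw [hsrec j (n + 1) (by omega), Nat.add_sub_cancel, Finset.sum_range_succ, Nat.sub_self]
  linarith

end Recurrence

theorem stmt12 (t s : ℕ → ℕ → ℝ)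
    (ht_nonneg : ∀ j n, 1 ≤ n → 0 ≤ t j n)
    (hs1 : ∀ j, s j 1 = t j 1)
    (hsrec : ∀ j, ∀ n : ℕ, 2 ≤ n →
      s j n = ∑ i ∈ Finset.range (j + 1), s i (n - 1) * t (j - i) n)
    (ht : ∀ j : ℕ, ∃ R : ℝ, 0 < R ∧ ∀ n : ℕ, 1 ≤ n →
      |t j n - (1 / ((j.factorial : ℝ) * (n : ℝ) ^ j)) * (1 - 1 / (n : ℝ))|
        ≤ R / (n : ℝ) ^ (j + 2)) :
    ∀ j : ℕ, ∃ C : ℝ, 0 < C ∧ ∀ n : ℕ, 1 ≤ n →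
      s j n ≤ C * (n : ℝ) ^ (-(1 : ℝ) / ((j : ℝ) + 1)) := by
  choose R hR hRt using ht
  have htR : ∀ k n : ℕ, 1 ≤ n → t k n ≤
      1 / ((k.factorial : ℝ) * (n : ℝ) ^ k) * (1 - 1 / (n : ℝ)) + R k / (n : ℝ) ^ (k + 2) :=
    fun k n hn => sub_le_iff_le_add'.1 (abs_sub_le_iff.1 (hRt k n hn)).1
  have ht0 : ∀ n : ℕ, 1 ≤ n → t 0 n ≤ 1 - 1 / (n : ℝ) + R 0 / (n : ℝ) ^ 2 := fun n hn => by
    simpa using htR 0 n hn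
  have htK : ∀ k n : ℕ, 1 ≤ k → 1 ≤ n → t k n ≤ (1 + R k) / n := fun k n hk hn =>
    (htR k n hn).trans (inv_factorial_mul_pow_mul_one_sub_add_le hk hn (hR k).le)
  have hs_nonneg := nonneg_of_recurrence ht_nonneg hs1 hsrec
  intro j
  induction j using Nat.strong_induction_on with
  | _ j ih =>
    exact exists_bound_of_lower_rows hsrec hs_nonneg (hR 0).le ht0
      (fun k => by linarith [hR k]) htK j ih
end
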